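/- For n ≥ 1, the trace distance between the ciphertext states of the two one-bit messages in the conjugate-coding public-key scheme is at most (√2/2)^n: D(ρ₀, ρ₁) ≤ (1/√2)^n. -/

import Mathlib

open Matrix Finset ComplexOrder

/-- Parity of a bit string. -/
def parity {n : ℕ} (ν : Fin n → ZMod 2) : ZMod 2 := ∑ l, ν l

/-- Tensor product of a family of one-qubit matrices, as a matrix indexed by bit strings. -/
def tens {n : ℕ} (A : Fin n → Matrix (ZMod 2) (ZMod 2) ℂ) :
    Matrix (Fin n → ZMod 2) (Fin n → ZMod 2) ℂ :=
  Matrix.of fun x y => ∏ l, A l (x l) (y l)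

/-- The four conjugate-coding states `ψ_{ij} = H^j X^i |0⟩`. -/
noncomputable def psi (i j : ZMod 2) : ZMod 2 → ℂ :=
  if j = 0 then (if i = 0 then ![1, 0] else ![0, 1])
  else if i = 0 then (1 / Real.sqrt 2 : ℝ) • ![1, 1]
  else (1 / Real.sqrt 2 : ℝ) • ![1, -1]

/-- The rank-one projector `|ψ_{ij}⟩⟨ψ_{ij}|`. -/
noncomputable def projQ (i j : ZMod 2) : Matrix (ZMod 2) (ZMod 2) ℂ :=
  Matrix.vecMulVec (psi i j) (star (psi i j))

/-- The ciphertext state `ρ_b` of the one-bit message `b`. -/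
noncomputable def rho (n : ℕ) (b : ZMod 2) :
    Matrix (Fin n → ZMod 2) (Fin n → ZMod 2) ℂ :=
  (1 / 2 ^ (2 * n - 1) : ℂ) •
    ∑ i ∈ Finset.univ.filter (fun i : Fin n → ZMod 2 => parity i = b),
      ∑ j : Fin n → ZMod 2, tens (fun l => projQ (i l) (j l))

/-- `|A|` is the positive semidefinite square root of `AᴴA`. -/
noncomputable def matAbs {m : Type*} [Fintype m] [DecidableEq m] (A : Matrix m m ℂ) :
    Matrix m m ℂ :=
  (Matrix.posSemidef_conjTranspose_mul_self A).1.eigenvectorUnitary.1 *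
    diagonal ((↑) ∘ (√·) ∘ (Matrix.posSemidef_conjTranspose_mul_self A).1.eigenvalues) *
    (star (Matrix.posSemidef_conjTranspose_mul_self A).1.eigenvectorUnitary : Matrix m m ℂ)

/-- The trace norm `‖A‖_tr = tr |A|` (a real number). -/
noncomputable def traceNorm {m : Type*} [Fintype m] [DecidableEq m] (A : Matrix m m ℂ) : ℝ :=
  (matAbs A).trace.re

/-!
With `sign u = (-1)^u`, the difference `ρ₀ - ρ₁` is
`2^(1-2n) Σ_i sign (P i) Σ_j ⨂_l Q(i l, j l)`.
Since `sign (P i) = ∏_l sign (i l)`, this sum factorises qubit by qubit into `2^(1-2n) K^{⊗n}`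
with `K = Σ_{u,j} sign u • Q(u, j) = σ_z + σ_x = √2 H`. As `K` is Hermitian with `K² = 2`,
the matrix `|ρ₀ - ρ₁|` is the scalar `2^(1-2n) √2^n` on a space of dimension `2^n`, whence
`D(ρ₀, ρ₁) = 2^(-2n) √2^n 2^n = (1/√2)^n`.
-/

lemma zmod_two_eq_zero_or_eq_one (x : ZMod 2) : x = 0 ∨ x = 1 := by
  revert x; decide

lemma sum_zmod_two {M : Type*} [AddCommMonoid M] (f : ZMod 2 → M) : ∑ w, f w = f 0 + f 1 :=
  Fin.sum_univ_two f

def sign (w : ZMod 2) : ℂ := if w = 0 then 1 else -1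

lemma sign_add (a b : ZMod 2) : sign (a + b) = sign a * sign b := by
  obtain rfl | rfl := zmod_two_eq_zero_or_eq_one a <;>
    obtain rfl | rfl := zmod_two_eq_zero_or_eq_one b <;> simp +decide [sign]

lemma sign_parity {n : ℕ} (ν : Fin n → ZMod 2) : sign (parity ν) = ∏ l, sign (ν l) :=
  map_prod (⟨⟨sign, rfl⟩, sign_add⟩ : Multiplicative (ZMod 2) →* ℂ) _ _

lemma sum_filter_zero_sub_sum_filter_one {α M : Type*} [AddCommGroup M] [Module ℂ M]
    (s : Finset α) (g : α → ZMod 2) (F : α → M) :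
    ∑ a ∈ s with g a = 0, F a - ∑ a ∈ s with g a = 1, F a =
      ∑ a ∈ s, sign (g a) • F a := by
  rw [sum_filter, sum_filter, ← sum_sub_distrib]
  refine sum_congr rfl fun a _ => ?_
  obtain h | h := zmod_two_eq_zero_or_eq_one (g a) <;> simp [h, sign]

-- The literals of `psi` live over `Fin 2`; retyped over `ZMod 2`, `simp` can evaluate them.
lemma psi_apply (i j x : ZMod 2) : psi i j x =
    if j = 0 then (if i = 0 then (![1, 0] : ZMod 2 → ℂ) x else (![0, 1] : ZMod 2 → ℂ) x)
    else if i = 0 then (1 / Real.sqrt 2 : ℝ) • (![1, 1] : ZMod 2 → ℂ) x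
    else (1 / Real.sqrt 2 : ℝ) • (![1, -1] : ZMod 2 → ℂ) x := by
  obtain rfl | rfl := zmod_two_eq_zero_or_eq_one i <;>
    obtain rfl | rfl := zmod_two_eq_zero_or_eq_one j <;> rfl

def sqrtTwoHadamard : Matrix (ZMod 2) (ZMod 2) ℂ := of fun a b => sign (a * b)

lemma sum_sign_smul_sum_projQ : ∑ u, sign u • ∑ j, projQ u j = sqrtTwoHadamard := by
  have h2 : ((√2 : ℝ) : ℂ)⁻¹ * ((√2 : ℝ) : ℂ)⁻¹ = 1 / 2 := by
    rw [← mul_inv, ← Complex.ofReal_mul, Real.mul_self_sqrt zero_le_two]; norm_num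
  ext a b
  obtain rfl | rfl := zmod_two_eq_zero_or_eq_one a <;>
    obtain rfl | rfl := zmod_two_eq_zero_or_eq_one b <;>
    simp [sqrtTwoHadamard, sum_zmod_two, sign, projQ, psi_apply, vecMulVec_apply, h2] <;> norm_num

lemma sqrtTwoHadamard_mul_self : sqrtTwoHadamard * sqrtTwoHadamard = (2 : ℂ) • 1 := by
  ext a b
  obtain rfl | rfl := zmod_two_eq_zero_or_eq_one a <;>
    obtain rfl | rfl := zmod_two_eq_zero_or_eq_one b <;>
    simp [sqrtTwoHadamard, mul_apply, sum_zmod_two, sign, one_add_one_eq_two]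

lemma sqrtTwoHadamard_conjTranspose : sqrtTwoHadamardᴴ = sqrtTwoHadamard := by
  ext a b
  simp only [conjTranspose_apply, sqrtTwoHadamard, of_apply, mul_comm b a, sign]
  split_ifs <;> simp

section Tensor

variable {n : ℕ}

lemma tens_one : tens (fun _ : Fin n => (1 : Matrix (ZMod 2) (ZMod 2) ℂ)) = 1 := by
  ext x y
  simp only [tens, of_apply, one_apply, prod_boole, mem_univ, forall_const, funext_iff]

lemma tens_smul (c : Fin n → ℂ) (A : Fin n → Matrix (ZMod 2) (ZMod 2) ℂ) :
    tens (fun l => c l • A l) = (∏ l, c l) • tens A := by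
  ext x y
  simp only [tens, of_apply, Matrix.smul_apply, smul_eq_mul, prod_mul_distrib]

lemma sum_tens {ι : Type*} [Fintype ι] (A : Fin n → ι → Matrix (ZMod 2) (ZMod 2) ℂ) :
    ∑ g : Fin n → ι, tens (fun l => A l (g l)) = tens (fun l => ∑ i, A l i) := by
  ext x y
  simp only [tens, of_apply, Matrix.sum_apply, Fintype.prod_sum]

lemma tens_mul (A B : Fin n → Matrix (ZMod 2) (ZMod 2) ℂ) :
    tens A * tens B = tens (fun l => A l * B l) := by
  ext x y
  simp only [tens, mul_apply, of_apply, ← prod_mul_distrib, Fintype.prod_sum]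

lemma tens_conjTranspose (A : Fin n → Matrix (ZMod 2) (ZMod 2) ℂ) :
    (tens A)ᴴ = tens (fun l => (A l)ᴴ) := by
  ext x y
  simp [tens, conjTranspose_apply]

end Tensor

section TraceNorm

variable {m : Type*} [Fintype m] [DecidableEq m]

lemma matAbs_eq_cfc_sqrt (A : Matrix m m ℂ) : matAbs A = cfc Real.sqrt (Aᴴ * A) := by
  rw [(posSemidef_conjTranspose_mul_self A).1.cfc_eq]
  rfl

lemma matAbs_eq_smul_one {A : Matrix m m ℂ} {r : ℝ} (hr : 0 ≤ r)
    (h : Aᴴ * A = (r ^ 2) • (1 : Matrix m m ℂ)) : matAbs A = r • (1 : Matrix m m ℂ) := by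
  rw [matAbs_eq_cfc_sqrt, h, ← Algebra.algebraMap_eq_smul_one, cfc_algebraMap, Real.sqrt_sq hr,
    Algebra.algebraMap_eq_smul_one]

lemma traceNorm_eq_mul_card {A : Matrix m m ℂ} {r : ℝ} (hr : 0 ≤ r)
    (h : Aᴴ * A = (r ^ 2) • (1 : Matrix m m ℂ)) : traceNorm A = r * Fintype.card m := by
  rw [traceNorm, matAbs_eq_smul_one hr h, trace_smul, trace_one]
  simp

end TraceNorm

lemma sum_sign_parity_smul_sum_tens_projQ (n : ℕ) :
    ∑ i : Fin n → ZMod 2,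
        sign (parity i) • ∑ j : Fin n → ZMod 2, tens (fun l => projQ (i l) (j l)) =
      tens (fun _ => sqrtTwoHadamard) := by
  have hfactor (i : Fin n → ZMod 2) :
      sign (parity i) • ∑ j : Fin n → ZMod 2, tens (fun l => projQ (i l) (j l)) =
        tens (fun l => ∑ w, sign (i l) • projQ (i l) w) := by
    rw [sign_parity, smul_sum, ← sum_tens fun l w => sign (i l) • projQ (i l) w]
    exact sum_congr rfl fun j _ => (tens_smul _ _).symm
  rw [sum_congr rfl fun i _ => hfactor i, sum_tens fun _ u => ∑ w, sign u • projQ u w]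
  simp_rw [← smul_sum, sum_sign_smul_sum_projQ]

lemma rho_zero_sub_rho_one (n : ℕ) :
    rho n 0 - rho n 1 =
      (1 / 2 ^ (2 * n - 1) : ℂ) • tens (fun _ : Fin n => sqrtTwoHadamard) := by
  rw [rho, rho, ← smul_sub, sum_filter_zero_sub_sum_filter_one,
    sum_sign_parity_smul_sum_tens_projQ]

lemma conjTranspose_mul_self_rho_sub (n : ℕ) :
    (rho n 0 - rho n 1)ᴴ * (rho n 0 - rho n 1) =
      (√2 ^ n / 2 ^ (2 * n - 1)) ^ 2 •
        (1 : Matrix (Fin n → ZMod 2) (Fin n → ZMod 2) ℂ) := by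
  have hsq : (√2 ^ n / 2 ^ (2 * n - 1)) ^ 2 = (2 : ℝ) ^ n / (2 ^ (2 * n - 1)) ^ 2 := by
    rw [div_pow, ← pow_mul, mul_comm, pow_mul, Real.sq_sqrt zero_le_two]
  rw [hsq, rho_zero_sub_rho_one, conjTranspose_smul, tens_conjTranspose, smul_mul_smul_comm,
    tens_mul]
  simp_rw [sqrtTwoHadamard_conjTranspose, sqrtTwoHadamard_mul_self, tens_smul, tens_one, smul_smul,
    ← Complex.coe_smul]
  congr 1
  push_cast
  simp only [prod_const, card_univ, Fintype.card_fin, star_div₀, star_one, star_pow, star_ofNat]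
  ring

theorem traceDist_rho_le_general (n : ℕ) :
    (1 / 2) * traceNorm (rho n 0 - rho n 1) ≤ (1 / Real.sqrt 2) ^ n := by
  have hcard : (Fintype.card (Fin n → ZMod 2) : ℝ) = 2 ^ n := by simp
  have hs : 0 < √2 ^ n := by positivity
  have hss : √2 ^ n * √2 ^ n = 2 ^ n := by rw [← mul_pow, Real.mul_self_sqrt zero_le_two]
  -- an equality for `n ≥ 1`; strict for `n = 0`, where `2 * n - 1` truncates to `0`
  have hpow : (2 : ℝ) ^ n * 2 ^ n ≤ 2 * 2 ^ (2 * n - 1) := by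
    rw [← pow_add, ← pow_succ']
    exact pow_le_pow_right₀ one_le_two (by omega)
  rw [traceNorm_eq_mul_card (by positivity) (conjTranspose_mul_self_rho_sub n), hcard,
    _root_.one_div_pow, le_div_iff₀ hs]
  calc 1 / 2 * (√2 ^ n / 2 ^ (2 * n - 1) * 2 ^ n) * √2 ^ n
      = 2 ^ n * 2 ^ n / (2 * 2 ^ (2 * n - 1)) := by rw [← hss]; ring
    _ ≤ 1 := div_le_one_of_le₀ hpow (by positivity)

/-- `D(ρ₀, ρ₁) ≤ (1/√2)^n`. -/
theorem traceDist_rho_le (n : ℕ) (hn : 1 ≤ n) :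
    (1 / 2) * traceNorm (rho n 0 - rho n 1) ≤ (1 / Real.sqrt 2) ^ n :=
  traceDist_rho_le_general n
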